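/- arXiv:1012.2743 — 2 statements merged into one kernel-verified Lean document; each statement's English description precedes it below -/
import Mathlib

section
/- Fix an integer m ≥ 2 and let μ be the probability distribution on [0,∞) whose k-th moment equals the Fuss–Catalan number α_k(m) for every k ≥ 0. Then its Stieltjes transform s^{(m)}(z) := ∫ (x − z)⁻¹ dμ(x) satisfies, for every z in the upper half-plane ℂ⁺, the algebraic equation 1 + z·s^{(m)}(z) + (−1)^{m+1}·z^m·(s^{(m)}(z))^{m+1} = 0. -/
/-!
With `p = m + 1`, the Fuss–Catalan number `α_k(m)` is the Raney number `A_k(p, 1)`, where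
`A_k(p, r) = r / (r + p k) · C(r + p k, k)`. The Rothe–Hagen identity gives the convolution rule
`∑_{i + j = n} A_i(p, r) A_j(p, s) = A_n(p, r + s)`, so the generating function
`B(w) = ∑_k α_k wᵏ` satisfies `B(w)ʳ = ∑_k A_k(p, r) wᵏ`; as `A_k(p, p) = A_{k+1}(p, 1)`, this
gives `B = 1 + w Bᵖ` for small `w`.

Since `α_k ≤ 2^{(m+1)k}`, Markov's inequality for the even moments confines `ν` to
`|x| ≤ 2^{m+1} + 1`. For `|z|` beyond that bound the geometric expansion of `(x - z)⁻¹` gives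
`s(z) = -∑_k α_k z^{-k-1} = -B(1/z) / z`, and the equation becomes `B = 1 + w Bᵖ` at `w = 1/z`.
Both sides being holomorphic on the upper half-plane, the identity theorem extends it from large
`|z|` to all of `ℂ⁺`.
-/

open MeasureTheory

/-- The Fuss–Catalan number `α_k(m) = (1/(mk+1)) · C(km+k, k)`, as a real number. -/
noncomputable def fussCatalan (m k : ℕ) : ℝ :=
  (Nat.choose (k * m + k) k : ℝ) / (m * k + 1)

open Finset Filter Topology

section Raney

noncomputable def shiftedChoose (p s n : ℕ) : ℝ := (s + p * n).choose n

/-- The Raney number `A_k(p, r) = r / (r + p k) · C(r + p k, k)`, written without division. -/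
noncomputable def raney (p r : ℕ) : ℕ → ℝ
  | 0 => 1
  | k + 1 => shiftedChoose p r (k + 1) - p * shiftedChoose p (r + (p - 1)) k

variable (p : ℕ)

@[simp] lemma shiftedChoose_zero_right (s : ℕ) : shiftedChoose p s 0 = 1 := by
  simp [shiftedChoose]

@[simp] lemma raney_zero_right (r : ℕ) : raney p r 0 = 1 := rfl

lemma raney_succ (r k : ℕ) :
    raney p r (k + 1) = shiftedChoose p r (k + 1) - p * shiftedChoose p (r + (p - 1)) k := rfl

lemma shiftedChoose_succ_succ (s n : ℕ) :
    shiftedChoose p (s + 1) (n + 1) = shiftedChoose p s (n + 1) + shiftedChoose p (s + p) n := by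
  rw [shiftedChoose, shiftedChoose, shiftedChoose,
    show s + 1 + p * (n + 1) = s + p * (n + 1) + 1 by ring,
    show s + p + p * n = s + p * (n + 1) by ring, Nat.choose_succ_succ', Nat.cast_add, add_comm]

lemma shiftedChoose_zero_succ (n : ℕ) :
    shiftedChoose p 0 (n + 1) = p * shiftedChoose p (p - 1) n := by
  rcases Nat.eq_zero_or_pos p with rfl | hp
  · simp [shiftedChoose]
  have h := Nat.add_one_mul_choose_eq (p - 1 + p * n) n
  rw [show p - 1 + p * n + 1 = p * (n + 1) by rw [mul_add]; omega] at h
  have h' : ((p * (n + 1) : ℕ) : ℝ) * shiftedChoose p (p - 1) n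
      = shiftedChoose p 0 (n + 1) * (n + 1) := by
    simp only [shiftedChoose, zero_add]; exact_mod_cast h
  push_cast at h'
  have : ((n : ℝ) + 1) ≠ 0 := by positivity
  apply mul_right_cancel₀ this
  linear_combination -h'

lemma raney_zero_left (k : ℕ) : raney p 0 (k + 1) = 0 := by
  rw [raney_succ, shiftedChoose_zero_succ, zero_add, sub_self]

/-- The Rothe–Hagen identity. -/
lemma sum_antidiagonal_raney_mul_shiftedChoose (r n s : ℕ) :
    ∑ ij ∈ antidiagonal n, raney p r ij.1 * shiftedChoose p s ij.2 = shiftedChoose p (r + s) n := by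
  induction n generalizing s with
  | zero => simp
  | succ n ih =>
    induction s with
    | zero =>
      rw [Nat.sum_antidiagonal_succ']
      simp only [shiftedChoose_zero_succ, mul_left_comm _ (p : ℝ), ← mul_sum, ih,
        raney_succ, shiftedChoose_zero_right, add_zero]
      ring
    | succ s ihs =>
      rw [Nat.sum_antidiagonal_succ'] at ihs ⊢
      simp only [shiftedChoose_succ_succ, mul_add, sum_add_distrib, shiftedChoose_zero_right]
        at ihs ⊢
      rw [← add_assoc, ihs, ih, ← add_assoc r s 1, shiftedChoose_succ_succ, add_assoc r s p]

lemma sum_antidiagonal_raney_mul_raney (r s n : ℕ) :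
    ∑ ij ∈ antidiagonal n, raney p r ij.1 * raney p s ij.2 = raney p (r + s) n := by
  cases n with
  | zero => simp
  | succ n =>
    have hR := sum_antidiagonal_raney_mul_shiftedChoose p r (n + 1) s
    have hR' := sum_antidiagonal_raney_mul_shiftedChoose p r n (s + (p - 1))
    rw [Nat.sum_antidiagonal_succ'] at hR ⊢
    simp only [raney_succ, mul_sub, sum_sub_distrib, mul_left_comm _ (p : ℝ), ← mul_sum,
      shiftedChoose_zero_right, raney_zero_right] at hR ⊢
    rw [hR', ← add_assoc r s]
    linear_combination hR

lemma raney_mul (r k : ℕ) :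
    ((r : ℝ) + p * k) * raney p r k = r * ((r + p * k).choose k : ℝ) := by
  cases k with
  | zero => simp
  | succ k =>
    rcases Nat.eq_zero_or_pos p with rfl | hp
    · simp [raney_succ, shiftedChoose]
    have h := Nat.add_one_mul_choose_eq (r + (p - 1) + p * k) k
    rw [show r + (p - 1) + p * k + 1 = r + p * (k + 1) by rw [mul_add]; omega] at h
    have h' : ((r + p * (k + 1) : ℕ) : ℝ) * shiftedChoose p (r + (p - 1)) k
        = shiftedChoose p r (k + 1) * (k + 1) := by
      simp only [shiftedChoose]; exact_mod_cast h
    simp only [raney_succ, shiftedChoose] at h' ⊢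
    push_cast at h' ⊢
    linear_combination (-(p : ℝ)) * h'

lemma raney_one_eq_fussCatalan (m k : ℕ) : raney (m + 1) 1 k = fussCatalan m k := by
  have h1 := raney_mul (m + 1) 1 k
  have h2 := congrArg (Nat.cast : ℕ → ℝ) (Nat.choose_mul_succ_eq ((m + 1) * k) k)
  rw [show (m + 1) * k + 1 - k = m * k + 1 by rw [add_mul]; omega] at h2
  rw [show 1 + (m + 1) * k = (m + 1) * k + 1 by ring] at h1
  rw [fussCatalan, show k * m + k = (m + 1) * k by ring, eq_div_iff (by positivity)]
  apply mul_right_cancel₀ (b := ((m + 1) * k + 1 : ℝ)) (by positivity)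
  push_cast at h1 h2
  linear_combination (m * k + 1 : ℝ) * h1 - h2

lemma raney_self_eq_raney_one_succ (hp : 0 < p) (k : ℕ) : raney p p k = raney p 1 (k + 1) := by
  have h1 := raney_mul p p k
  have h2 := raney_mul p 1 (k + 1)
  have h3 := congrArg (Nat.cast : ℕ → ℝ) (Nat.add_one_mul_choose_eq (p * (k + 1)) k)
  rw [show p + p * k = p * (k + 1) by ring] at h1
  rw [show 1 + p * (k + 1) = p * (k + 1) + 1 by ring] at h2
  apply mul_right_cancel₀ (b := (p : ℝ) * (k + 1) * (p * (k + 1) + 1)) (by positivity)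
  push_cast at h1 h2 h3
  linear_combination (p * (k + 1) + 1 : ℝ) * h1 - (p : ℝ) * (k + 1) * h2 + (p : ℝ) * h3

variable {p} {w : ℂ}

lemma raney_series_add {r s : ℕ} (hr : Summable fun k => ‖(raney p r k : ℂ) * w ^ k‖)
    (hs : Summable fun k => ‖(raney p s k : ℂ) * w ^ k‖) :
    (Summable fun k => ‖(raney p (r + s) k : ℂ) * w ^ k‖) ∧
      ∑' k, (raney p (r + s) k : ℂ) * w ^ k
        = (∑' k, (raney p r k : ℂ) * w ^ k) * ∑' k, (raney p s k : ℂ) * w ^ k := by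
  have hcoef : ∀ n, ∑ ij ∈ antidiagonal n,
      (raney p r ij.1 : ℂ) * w ^ ij.1 * (raney p s ij.2 * w ^ ij.2)
        = (raney p (r + s) n : ℂ) * w ^ n := by
    intro n
    rw [← sum_antidiagonal_raney_mul_raney, Complex.ofReal_sum, sum_mul]
    refine sum_congr rfl fun ij hij => ?_
    rw [← (mem_antidiagonal.mp hij), pow_add]
    push_cast
    ring
  refine ⟨?_, ?_⟩
  · simpa only [hcoef] using summable_norm_sum_mul_antidiagonal_of_summable_norm hr hs
  · simp only [tsum_mul_tsum_eq_tsum_sum_antidiagonal_of_summable_norm hr hs, hcoef]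

lemma raney_series_pow (hw : Summable fun k => ‖(raney p 1 k : ℂ) * w ^ k‖) (j : ℕ) :
    (Summable fun k => ‖(raney p j k : ℂ) * w ^ k‖) ∧
      ∑' k, (raney p j k : ℂ) * w ^ k = (∑' k, (raney p 1 k : ℂ) * w ^ k) ^ j := by
  induction j with
  | zero =>
    have hsupp : ∀ k ∉ ({0} : Finset ℕ), (raney p 0 k : ℂ) * w ^ k = 0 := by
      rintro (_ | k) hk <;> simp_all [raney_zero_left]
    refine ⟨summable_of_ne_finset_zero fun k hk => by rw [hsupp k hk, norm_zero], ?_⟩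
    rw [tsum_eq_single 0 fun k hk => hsupp k (by simpa using hk)]
    simp
  | succ j ih =>
    obtain ⟨hsum, htsum⟩ := raney_series_add ih.1 hw
    exact ⟨hsum, by rw [htsum, ih.2, pow_succ]⟩

lemma raney_series_eq_one_add_mul_pow (hp : 0 < p)
    (hw : Summable fun k => ‖(raney p 1 k : ℂ) * w ^ k‖) :
    ∑' k, (raney p 1 k : ℂ) * w ^ k = 1 + w * (∑' k, (raney p 1 k : ℂ) * w ^ k) ^ p := by
  rw [← (raney_series_pow hw p).2, ← tsum_mul_left, hw.of_norm.tsum_eq_zero_add]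
  simp only [raney_zero_right, Complex.ofReal_one, pow_zero, mul_one,
    raney_self_eq_raney_one_succ p hp, pow_succ]
  congr 1
  exact tsum_congr fun k => by ring

end Raney

lemma fussCatalan_nonneg (m k : ℕ) : 0 ≤ fussCatalan m k := by
  unfold fussCatalan; positivity

lemma fussCatalan_le_pow (m k : ℕ) : fussCatalan m k ≤ ((2 : ℝ) ^ (m + 1)) ^ k := by
  calc fussCatalan m k ≤ ((k * m + k).choose k : ℝ) :=
        div_le_self (Nat.cast_nonneg _) (by norm_cast; omega)
    _ ≤ ((2 ^ (k * m + k) : ℕ) : ℝ) := by exact_mod_cast Nat.choose_le_two_pow _ _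
    _ = ((2 : ℝ) ^ (m + 1)) ^ k := by push_cast; rw [← pow_mul]; ring

lemma summable_norm_fussCatalan_mul_pow (m : ℕ) {w : ℂ} (hw : 2 ^ (m + 1) * ‖w‖ < 1) :
    Summable fun k => ‖(fussCatalan m k : ℂ) * w ^ k‖ := by
  refine Summable.of_nonneg_of_le (fun k => norm_nonneg _) (fun k => ?_)
    (summable_geometric_of_lt_one (by positivity) hw)
  rw [norm_mul, norm_pow, Complex.norm_real, Real.norm_of_nonneg (fussCatalan_nonneg m k), mul_pow]
  gcongr
  exact fussCatalan_le_pow m k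

lemma fussCatalan_series_eq_one_add_mul_pow (m : ℕ) {w : ℂ} (hw : 2 ^ (m + 1) * ‖w‖ < 1) :
    ∑' k, (fussCatalan m k : ℂ) * w ^ k
      = 1 + w * (∑' k, (fussCatalan m k : ℂ) * w ^ k) ^ (m + 1) := by
  have hsum := summable_norm_fussCatalan_mul_pow m hw
  simp only [← raney_one_eq_fussCatalan] at hsum ⊢
  exact raney_series_eq_one_add_mul_pow m.succ_pos hsum

lemma ae_abs_le_of_even_moment_le {μ : Measure ℝ} [IsFiniteMeasure μ] {R R' : ℝ}
    (hR : 0 ≤ R) (hRR' : R < R') (hint : ∀ k : ℕ, Integrable (fun x => x ^ (2 * k)) μ)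
    (hmom : ∀ k : ℕ, ∫ x, x ^ (2 * k) ∂μ ≤ R ^ (2 * k)) :
    ∀ᵐ x ∂μ, |x| ≤ R' := by
  have hR' : 0 < R' := hR.trans_lt hRR'
  have hbound : ∀ k : ℕ, μ.real {x | R' < |x|} ≤ ((R / R') ^ 2) ^ k := by
    intro k
    have hmarkov := mul_meas_ge_le_integral_of_nonneg
      (Eventually.of_forall (even_two_mul k).pow_nonneg) (hint k) (R' ^ (2 * k))
    have hsub : μ.real {x | R' < |x|} ≤ μ.real {x | R' ^ (2 * k) ≤ x ^ (2 * k)} := by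
      refine measureReal_mono (fun x hx => ?_)
      simp only [Set.mem_ofPred_eq] at hx ⊢
      rw [← (even_two_mul k).pow_abs x]
      exact pow_le_pow_left₀ hR'.le hx.le _
    rw [← pow_mul, div_pow, le_div_iff₀ (by positivity), mul_comm]
    linarith [hmom k, mul_le_mul_of_nonneg_left hsub (by positivity : (0 : ℝ) ≤ R' ^ (2 * k))]
  have hlim : Tendsto (fun k : ℕ => ((R / R') ^ 2) ^ k) atTop (𝓝 0) :=
    tendsto_pow_atTop_nhds_zero_of_lt_one (by positivity)
      (pow_lt_one₀ (by positivity) ((div_lt_one hR').mpr hRR') two_ne_zero)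
  have hnull : μ {x | R' < |x|} = 0 :=
    (measureReal_eq_zero_iff).mp (le_antisymm (ge_of_tendsto' hlim hbound) measureReal_nonneg)
  filter_upwards [measure_eq_zero_iff_ae_notMem.mp hnull] with x hx
  simpa using hx

lemma im_le_norm_ofReal_sub (x : ℝ) {z : ℂ} (hz : 0 ≤ z.im) : z.im ≤ ‖(x : ℂ) - z‖ := by
  simpa [abs_of_nonneg hz] using Complex.abs_im_le_norm ((x : ℂ) - z)

lemma ofReal_sub_ne_zero (x : ℝ) {z : ℂ} (hz : 0 < z.im) : (x : ℂ) - z ≠ 0 :=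
  norm_pos_iff.mp (hz.trans_le (im_le_norm_ofReal_sub x hz.le))

lemma norm_ofReal_sub_inv_le (x : ℝ) {z : ℂ} (hz : 0 < z.im) : ‖((x : ℂ) - z)⁻¹‖ ≤ z.im⁻¹ := by
  rw [norm_inv]
  exact inv_anti₀ hz (im_le_norm_ofReal_sub x hz.le)

lemma continuous_ofReal_sub_inv {z : ℂ} (hz : 0 < z.im) :
    Continuous fun x : ℝ => ((x : ℂ) - z)⁻¹ :=
  (Complex.continuous_ofReal.sub continuous_const).inv₀ (ofReal_sub_ne_zero · hz)

lemma differentiableOn_stieltjes (μ : Measure ℝ) [IsFiniteMeasure μ] :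
    DifferentiableOn ℂ (fun z : ℂ => ∫ x, ((x : ℂ) - z)⁻¹ ∂μ) {z | 0 < z.im} := by
  intro z₀ (hz₀ : 0 < z₀.im)
  set s : Set ℂ := {z | z₀.im / 2 < z.im}
  have hs : s ∈ 𝓝 z₀ :=
    (isOpen_lt continuous_const Complex.continuous_im).mem_nhds (half_lt_self hz₀)
  have hpos : ∀ z ∈ s, 0 < z.im := fun z hz => (half_pos hz₀).trans hz
  have hmeas : ∀ᶠ z in 𝓝 z₀, AEStronglyMeasurable (fun x : ℝ => ((x : ℂ) - z)⁻¹) μ :=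
    eventually_of_mem hs fun z hz =>
      (continuous_ofReal_sub_inv (hpos z hz)).aestronglyMeasurable
  have hint : Integrable (fun x : ℝ => ((x : ℂ) - z₀)⁻¹) μ :=
    Integrable.of_bound (continuous_ofReal_sub_inv hz₀).aestronglyMeasurable _
      (Eventually.of_forall (norm_ofReal_sub_inv_le · hz₀))
  have hmeas' : AEStronglyMeasurable (fun x : ℝ => (((x : ℂ) - z₀) ^ 2)⁻¹) μ :=
    (((Complex.continuous_ofReal.sub continuous_const).pow 2).inv₀
      fun x => pow_ne_zero 2 (ofReal_sub_ne_zero x hz₀)).aestronglyMeasurable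
  have hbound : ∀ᵐ (x : ℝ) ∂μ, ∀ z ∈ s, ‖(((x : ℂ) - z) ^ 2)⁻¹‖ ≤ (z₀.im / 2)⁻¹ ^ 2 := by
    refine Eventually.of_forall fun x z hz => ?_
    rw [← inv_pow, norm_pow]
    exact pow_le_pow_left₀ (norm_nonneg _)
      ((norm_ofReal_sub_inv_le x (hpos z hz)).trans (inv_anti₀ (half_pos hz₀) (le_of_lt hz))) 2
  have hderiv : ∀ᵐ (x : ℝ) ∂μ, ∀ z ∈ s,
      HasDerivAt (fun z => ((x : ℂ) - z)⁻¹) (((x : ℂ) - z) ^ 2)⁻¹ z := by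
    refine Eventually.of_forall fun x z hz => ?_
    simpa using ((hasDerivAt_id z).const_sub (x : ℂ)).fun_inv
      (ofReal_sub_ne_zero x (hpos z hz))
  exact (hasDerivAt_integral_of_dominated_loc_of_deriv_le hs hmeas hint hmeas' hbound
    (integrable_const _) hderiv).2.differentiableAt.differentiableWithinAt

lemma hasSum_sub_inv_of_norm_lt {a z : ℂ} (h : ‖a‖ < ‖z‖) :
    HasSum (fun k : ℕ => -a ^ k / z ^ (k + 1)) (a - z)⁻¹ := by
  have hz : z ≠ 0 := norm_pos_iff.mp ((norm_nonneg a).trans_lt h)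
  have hq : ‖a / z‖ < 1 := by rwa [norm_div, div_lt_one (norm_pos_iff.mpr hz)]
  have hf : (fun k : ℕ => -a ^ k / z ^ (k + 1)) = fun k => -z⁻¹ * (a / z) ^ k := by
    ext k
    rw [div_pow, pow_succ]
    field_simp
  have hv : (a - z)⁻¹ = -z⁻¹ * (1 - a / z)⁻¹ := by
    rw [neg_mul, ← mul_inv, mul_sub, mul_one, mul_div_cancel₀ a hz, ← inv_neg, neg_sub]
  rw [hf, hv]
  exact (hasSum_geometric_of_norm_lt_one hq).mul_left _

lemma hasSum_stieltjes_of_ae_abs_le {μ : Measure ℝ} [IsFiniteMeasure μ] {M : ℝ} (hM0 : 0 ≤ M)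
    (hM : ∀ᵐ x ∂μ, |x| ≤ M) {z : ℂ} (hz : M < ‖z‖) :
    HasSum (fun k : ℕ => -((∫ x, x ^ k ∂μ : ℝ) : ℂ) / z ^ (k + 1)) (∫ x, ((x : ℂ) - z)⁻¹ ∂μ) := by
  have hz0 : 0 < ‖z‖ := hM0.trans_lt hz
  have hint : ∀ k : ℕ, ∫ x, -(x : ℂ) ^ k / z ^ (k + 1) ∂μ
      = -((∫ x, x ^ k ∂μ : ℝ) : ℂ) / z ^ (k + 1) := by
    intro k
    simp only [integral_div, integral_neg, ← integral_complex_ofReal, Complex.ofReal_pow]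
  simp only [← hint]
  refine hasSum_integral_of_dominated_convergence (fun k _ => M ^ k / ‖z‖ ^ (k + 1))
    (fun k => (by fun_prop : Continuous fun x : ℝ => -(x : ℂ) ^ k / z ^ (k + 1))
      |>.aestronglyMeasurable)
    (fun k => ?_) (Eventually.of_forall fun _ => ?_) (integrable_const _) ?_
  · filter_upwards [hM] with x hx
    rw [norm_div, norm_neg, norm_pow, norm_pow, Complex.norm_real, Real.norm_eq_abs]
    gcongr
  · simpa only [pow_succ, div_mul_eq_div_div, div_pow] using
      (summable_geometric_of_lt_one (by positivity) ((div_lt_one hz0).mpr hz)).div_const ‖z‖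
  · filter_upwards [hM] with x hx
    refine hasSum_sub_inv_of_norm_lt (lt_of_le_of_lt ?_ hz)
    rwa [Complex.norm_real, Real.norm_eq_abs]

lemma fussCatalan_stieltjes_equation_of_norm_gt {μ : Measure ℝ} [IsFiniteMeasure μ] {m : ℕ}
    {M : ℝ} (hRM : 2 ^ (m + 1) ≤ M) (hM : ∀ᵐ x ∂μ, |x| ≤ M)
    (hmom : ∀ k : ℕ, ∫ x, x ^ k ∂μ = fussCatalan m k) {z : ℂ} (hz : M < ‖z‖) :
    1 + z * (∫ x, ((x : ℂ) - z)⁻¹ ∂μ)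
      + (-1) ^ (m + 1) * z ^ m * (∫ x, ((x : ℂ) - z)⁻¹ ∂μ) ^ (m + 1) = 0 := by
  have hM0 : 0 ≤ M := (by positivity : (0 : ℝ) ≤ 2 ^ (m + 1)).trans hRM
  have hz0 : z ≠ 0 := norm_pos_iff.mp (hM0.trans_lt hz)
  have hw : 2 ^ (m + 1) * ‖z⁻¹‖ < 1 := by
    rw [norm_inv, ← div_eq_mul_inv, div_lt_one (hM0.trans_lt hz)]
    exact hRM.trans_lt hz
  set B := ∑' k, (fussCatalan m k : ℂ) * z⁻¹ ^ k
  have hS : ∫ x, ((x : ℂ) - z)⁻¹ ∂μ = -(z⁻¹ * B) := by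
    rw [← (hasSum_stieltjes_of_ae_abs_le hM0 hM hz).tsum_eq, ← tsum_mul_left, ← tsum_neg]
    congr 1
    ext k
    rw [hmom, pow_succ, inv_pow]
    field_simp
  have hB := fussCatalan_series_eq_one_add_mul_pow m hw
  have hzz : z * z⁻¹ = 1 := mul_inv_cancel₀ hz0
  have hsign : (-1 : ℂ) ^ (m + 1) * (-1) ^ (m + 1) = 1 := by rw [← mul_pow]; norm_num
  have hpow : z ^ m * z⁻¹ ^ (m + 1) = z⁻¹ := by
    rw [pow_succ, ← mul_assoc, ← mul_pow, hzz, one_pow, one_mul]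
  rw [hS, neg_pow (z⁻¹ * B), mul_pow]
  linear_combination (-B) * hzz + B ^ (m + 1) * z ^ m * z⁻¹ ^ (m + 1) * hsign
    + B ^ (m + 1) * hpow - hB

theorem stieltjes_fussCatalan_equation_general
    (m : ℕ)
    (ν : Measure ℝ) (hνp : IsProbabilityMeasure ν)
    (hνint : ∀ k : ℕ, Integrable (fun x => x ^ k) ν)
    (hmom : ∀ k : ℕ, ∫ x, x ^ k ∂ν = fussCatalan m k)
    (z : ℂ) (hz : 0 < z.im) :
    1 + z * (∫ x, ((x : ℂ) - z)⁻¹ ∂ν)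
      + (-1) ^ (m + 1) * z ^ m * (∫ x, ((x : ℂ) - z)⁻¹ ∂ν) ^ (m + 1) = 0 := by
  set R : ℝ := 2 ^ (m + 1)
  have hbdd : ∀ᵐ x ∂ν, |x| ≤ R + 1 :=
    ae_abs_le_of_even_moment_le (by positivity) (lt_add_one R) (fun k => hνint (2 * k))
      (fun k => (hmom (2 * k)).trans_le (fussCatalan_le_pow m (2 * k)))
  set U : Set ℂ := {z | 0 < z.im}
  have hΦ : AnalyticOnNhd ℂ (fun z : ℂ => 1 + z * (∫ x, ((x : ℂ) - z)⁻¹ ∂ν)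
      + (-1) ^ (m + 1) * z ^ m * (∫ x, ((x : ℂ) - z)⁻¹ ∂ν) ^ (m + 1)) U := by
    have hS := differentiableOn_stieltjes ν
    exact DifferentiableOn.analyticOnNhd (by fun_prop)
      (isOpen_lt continuous_const Complex.continuous_im)
  have hz₀ : ((R + 2 : ℝ) : ℂ) * Complex.I ∈ U := by simp [U]; positivity
  refine hΦ.eqOn_zero_of_preconnected_of_eventuallyEq_zero
    (convex_halfSpace_im_gt 0).isPreconnected hz₀ ?_ hz
  have hnorm : R + 1 < ‖((R + 2 : ℝ) : ℂ) * Complex.I‖ := by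
    rw [norm_mul, Complex.norm_I, mul_one, Complex.norm_real, Real.norm_of_nonneg (by positivity)]
    linarith
  filter_upwards [(isOpen_lt continuous_const continuous_norm).mem_nhds hnorm] with w hw
  exact fussCatalan_stieltjes_equation_of_norm_gt (lt_add_one R).le hbdd hmom hw

/-- **Algebraic equation for the Stieltjes transform of the Fuss–Catalan distribution.**
If `ν` is a probability measure on `[0, ∞)` whose `k`-th moment is the Fuss–Catalan number
`α_k(m)`, then its Stieltjes transform `s(z) = ∫ (x - z)⁻¹ dν(x)` satisfies
`1 + z·s(z) + (-1)^{m+1}·z^m·s(z)^{m+1} = 0` for every `z` in the upper half-plane. -/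
theorem stieltjes_fussCatalan_equation
    (m : ℕ) (hm : 2 ≤ m)
    (ν : Measure ℝ) (hνp : IsProbabilityMeasure ν) (hν0 : ν (Set.Iio 0) = 0)
    (hνint : ∀ k : ℕ, Integrable (fun x => x ^ k) ν)
    (hmom : ∀ k : ℕ, ∫ x, x ^ k ∂ν = fussCatalan m k)
    (z : ℂ) (hz : 0 < z.im) :
    1 + z * (∫ x, ((x : ℂ) - z)⁻¹ ∂ν)
      + (-1) ^ (m + 1) * z ^ m * (∫ x, ((x : ℂ) - z)⁻¹ ∂ν) ^ (m + 1) = 0 :=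
  stieltjes_fussCatalan_equation_general m ν hνp hνint hmom z hz
end

section
/- Let A and B be n×n Hermitian matrices and let z = u + iv with v > 0. Then |Tr (A − zI)⁻¹ − Tr (B − zI)⁻¹| ≤ rank(A − B)/v. -/
/-!
For Hermitian `X` the Cayley transform `(X - z̄)(X - z)⁻¹` is unitary and equals
`1 + (z - z̄)(X - z)⁻¹`, so the difference of the two resolvents is `(U_A - U_B) / (2 i v)` and has
operator norm at most `1 / v`. By the resolvent identity
`(B - z)⁻¹ - (A - z)⁻¹ = (B - z)⁻¹ (A - B) (A - z)⁻¹` its rank is at most `rank (A - B)`, and the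
trace of any operator is bounded by its rank times its operator norm: compute the trace on an
orthonormal basis of its range.
-/

open Module
open scoped InnerProductSpace

namespace LinearMap

variable {𝕜 E : Type*} [RCLike 𝕜] [NormedAddCommGroup E] [InnerProductSpace 𝕜 E]
  [FiniteDimensional 𝕜 E]

theorem norm_trace_le_finrank_mul {f : E →ₗ[𝕜] E} {C : ℝ} (hf : ∀ x, ‖f x‖ ≤ C * ‖x‖) :
    ‖trace 𝕜 E f‖ ≤ finrank 𝕜 E * C := by
  let b := stdOrthonormalBasis 𝕜 E
  have hb (i) : ‖⟪b i, f (b i)⟫_𝕜‖ ≤ C := by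
    simpa [b.orthonormal.1 i] using (norm_inner_le_norm (b i) (f (b i))).trans
      (mul_le_mul_of_nonneg_left (hf (b i)) (norm_nonneg _))
  calc ‖trace 𝕜 E f‖ = ‖∑ i, ⟪b i, f (b i)⟫_𝕜‖ := by rw [trace_eq_sum_inner f b]
    _ ≤ ∑ i, ‖⟪b i, f (b i)⟫_𝕜‖ := norm_sum_le _ _
    _ ≤ ∑ _i, C := Finset.sum_le_sum fun i _ => hb i
    _ = finrank 𝕜 E * C := by
      rw [Finset.sum_const, Finset.card_univ, Fintype.card_fin, nsmul_eq_mul]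

theorem norm_trace_le_finrank_range_mul {f : E →ₗ[𝕜] E} {C : ℝ} (hf : ∀ x, ‖f x‖ ≤ C * ‖x‖) :
    ‖trace 𝕜 E f‖ ≤ finrank 𝕜 (range f) * C := by
  rw [← trace_restrict_eq_of_forall_mem (range f) f (mem_range_self f)]
  exact norm_trace_le_finrank_mul fun x => hf x

end LinearMap

theorem CStarRing.norm_le_one_of_mem_unitary {E : Type*} [NormedRing E] [StarRing E] [CStarRing E]
    {U : E} (hU : U ∈ unitary E) : ‖U‖ ≤ 1 := by
  rcases subsingleton_or_nontrivial E with hE | hE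
  · simp [Subsingleton.elim U 0]
  · exact (norm_of_mem_unitary hU).le

open Matrix
open scoped Matrix.Norms.L2Operator ComplexConjugate

section

variable {n : Type*} [Fintype n] [DecidableEq n]

theorem Matrix.norm_trace_le_rank_mul_norm {𝕜 : Type*} [RCLike 𝕜] (D : Matrix n n 𝕜) :
    ‖D.trace‖ ≤ D.rank * ‖D‖ := by
  have h := LinearMap.norm_trace_le_finrank_range_mul (f := toEuclideanLin D)
    (toEuclideanCLM (𝕜 := 𝕜) D).le_opNorm
  rwa [toEuclideanLin_eq_toLin_orthonormal, trace_toLin_eq,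
    ← rank_eq_finrank_range_toLin] at h

theorem Matrix.rank_inv_sub_inv_le {K : Type*} [Field K] {P Q : Matrix n n K} (hP : IsUnit P)
    (hQ : IsUnit Q) : (P⁻¹ - Q⁻¹).rank ≤ (Q - P).rank := by
  rw [inv_sub_inv (iff_of_true hP hQ)]
  exact (rank_mul_le_left (P⁻¹ * (Q - P)) Q⁻¹).trans (rank_mul_le_right P⁻¹ (Q - P))

theorem Matrix.IsHermitian.isUnit_sub_smul_one {X : Matrix n n ℂ} (hX : X.IsHermitian) {z : ℂ}
    (hz : z.im ≠ 0) : IsUnit (X - z • 1) := by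
  have hzσ : z ∉ spectrum ℂ X := by
    rw [hX.spectrum_eq_image_range]
    rintro ⟨r, -, rfl⟩
    exact hz (Complex.ofReal_im r)
  rw [spectrum.notMem_iff, Algebra.algebraMap_eq_smul_one] at hzσ
  simpa using hzσ.neg

theorem Matrix.IsHermitian.mul_inv_mem_unitaryGroup {X : Matrix n n ℂ} (hX : X.IsHermitian)
    {z : ℂ} (hz : z.im ≠ 0) :
    (X - conj z • 1) * (X - z • 1)⁻¹ ∈ unitaryGroup n ℂ := by
  set P := X - z • 1
  have hP : IsUnit P.det := (isUnit_iff_isUnit_det P).mp (hX.isUnit_sub_smul_one hz)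
  have hPstar : Pᴴ = X - conj z • 1 := by
    simp [P, conjTranspose_sub, hX.eq]
  have hnormal : P * Pᴴ = Pᴴ * P := by
    rw [hPstar]
    have hX1 (a : ℂ) : Commute X (a • 1) := (Commute.one_right X).smul_right a
    have h11 (a b : ℂ) : Commute (a • (1 : Matrix n n ℂ)) (b • 1) :=
      ((Commute.one_left 1).smul_left a).smul_right b
    exact (((Commute.refl X).sub_right (hX1 _)).sub_left ((hX1 z).symm.sub_right (h11 _ _))).eq
  rw [mem_unitaryGroup_iff', star_eq_conjTranspose, ← hPstar, conjTranspose_mul,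
    conjTranspose_conjTranspose]
  calc (P⁻¹)ᴴ * P * (Pᴴ * P⁻¹) = (P⁻¹)ᴴ * Pᴴ * (P * P⁻¹) := by
        rw [mul_assoc, ← mul_assoc P, hnormal, mul_assoc, mul_assoc]
    _ = 1 := by
        rw [← conjTranspose_mul, mul_nonsing_inv _ hP, conjTranspose_one, one_mul]

theorem Matrix.IsHermitian.inv_sub_smul_one_eq {X : Matrix n n ℂ} (hX : X.IsHermitian) {z : ℂ}
    (hz : z.im ≠ 0) :
    (X - z • 1)⁻¹ = (z - conj z)⁻¹ • ((X - conj z • 1) * (X - z • 1)⁻¹ - 1) := by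
  have hc : z - conj z ≠ 0 := by simpa [Complex.sub_conj] using hz
  have hP : IsUnit (X - z • 1).det := (isUnit_iff_isUnit_det _).mp (hX.isUnit_sub_smul_one hz)
  have hQ : X - conj z • 1 = (X - z • 1) + (z - conj z) • 1 := by rw [sub_smul]; abel
  rw [hQ, add_mul, mul_nonsing_inv _ hP, smul_mul_assoc, one_mul, add_sub_cancel_left,
    smul_smul, inv_mul_cancel₀ hc, one_smul]

theorem Matrix.IsHermitian.norm_inv_sub_inv_le {A B : Matrix n n ℂ} (hA : A.IsHermitian)
    (hB : B.IsHermitian) {z : ℂ} (hz : z.im ≠ 0) :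
    ‖(A - z • 1)⁻¹ - (B - z • 1)⁻¹‖ ≤ 1 / |z.im| := by
  have hc : ‖z - conj z‖ = 2 * |z.im| := by
    simp [Complex.sub_conj, Complex.norm_real]
  have hUA := CStarRing.norm_le_one_of_mem_unitary (hA.mul_inv_mem_unitaryGroup hz)
  have hUB := CStarRing.norm_le_one_of_mem_unitary (hB.mul_inv_mem_unitaryGroup hz)
  rw [hA.inv_sub_smul_one_eq hz, hB.inv_sub_smul_one_eq hz, ← smul_sub, sub_sub_sub_cancel_right,
    norm_smul, norm_inv, hc]
  calc (2 * |z.im|)⁻¹ * ‖(A - conj z • 1) * (A - z • 1)⁻¹ - (B - conj z • 1) * (B - z • 1)⁻¹‖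
      ≤ (2 * |z.im|)⁻¹ * (1 + 1) := by
        gcongr
        exact (norm_sub_le _ _).trans (add_le_add hUA hUB)
    _ = 1 / |z.im| := by field_simp; norm_num

end

/-- **Resolvent trace perturbation bound.** For Hermitian matrices `A`, `B` and `z = u + iv`
with `v > 0`, `|Tr (A − zI)⁻¹ − Tr (B − zI)⁻¹| ≤ rank(A − B)/v`. -/
theorem trace_resolvent_rank_bound
    (n : ℕ) (A B : Matrix (Fin n) (Fin n) ℂ)
    (hA : A.IsHermitian) (hB : B.IsHermitian)
    (z : ℂ) (hz : 0 < z.im) :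
    ‖Matrix.trace (A - z • 1)⁻¹ - Matrix.trace (B - z • 1)⁻¹‖
      ≤ ((A - B).rank : ℝ) / z.im := by
  have hz₀ : z.im ≠ 0 := hz.ne'
  have hrank : ((B - z • 1)⁻¹ - (A - z • 1)⁻¹).rank ≤ (A - B).rank := by
    simpa only [sub_sub_sub_cancel_right] using
      rank_inv_sub_inv_le (hB.isUnit_sub_smul_one hz₀) (hA.isUnit_sub_smul_one hz₀)
  rw [norm_sub_rev, ← trace_sub]
  calc ‖((B - z • 1)⁻¹ - (A - z • 1)⁻¹).trace‖
      ≤ ((B - z • 1)⁻¹ - (A - z • 1)⁻¹).rank * ‖(B - z • 1)⁻¹ - (A - z • 1)⁻¹‖ :=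
        norm_trace_le_rank_mul_norm _
    _ ≤ (A - B).rank * (1 / |z.im|) := by
        gcongr
        exact hB.norm_inv_sub_inv_le hA hz₀
    _ = (A - B).rank / z.im := by rw [abs_of_pos hz, mul_one_div]
end
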